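/- The cross-ratio datum T = ((1,2,3,4),(1,2,5,6),(1,2,7,8),(3,4,5,6),(3,4,7,8)) on 8 points has cross-ratio degree exactly 4: there exists a nonzero polynomial q ∈ ℂ[x₁,…,x₅] such that for every (a₁,…,a₅) ∈ (ℂ∖{0,1})⁵ with q(a₁,…,a₅) ≠ 0, the set of tuples (p₁,…,p₈) of pairwise distinct points of ℙ¹(ℂ) with p₁ = ∞, p₂ = 0, p₃ = 1 satisfying CR(p₁,p₂,p₃,p₄)=a₁, CR(p₁,p₂,p₅,p₆)=a₂, CR(p₁,p₂,p₇,p₈)=a₃, CR(p₃,p₄,p₅,p₆)=a₄, CR(p₃,p₄,p₇,p₈)=a₅ has exactly 4 elements. -/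

import Mathlib

/-!
Normalizing `p 0 = ∞`, `p 1 = 0`, `p 2 = 1`, the first three cross-ratio conditions read
`p 3 = a 0`, `p 5 = a 1 * p 4`, `p 7 = a 2 * p 6`. Substituting these, the last two conditions
become two independent quadratic equations, one for `p 4` and one for `p 6`, so generically
there are `2 * 2 = 4` configurations. The polynomial `q` multiplies the two discriminants (each
quadratic has two distinct roots) with four resultants, which keep the points `p 4`, `p 5` apart
from `p 6`, `p 7`; all other coincidences among the eight points are already excluded by
`a i ∉ {0, 1}`.
-/

open OnePoint

/-- Cross-ratio of four points of `ℙ¹(ℂ) = OnePoint ℂ`: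
`CR(z₁,z₂,z₃,z₄) = ((z₃−z₁)(z₄−z₂))/((z₃−z₂)(z₄−z₁))` when all points are finite,
extended to one point at infinity by omitting the two factors containing it. -/
noncomputable def CR : OnePoint ℂ → OnePoint ℂ → OnePoint ℂ → OnePoint ℂ → ℂ
  | Option.none,    Option.some z₂, Option.some z₃, Option.some z₄ => (z₄ - z₂) / (z₃ - z₂)
  | Option.some z₁, Option.none,    Option.some z₃, Option.some z₄ => (z₃ - z₁) / (z₄ - z₁)
  | Option.some z₁, Option.some z₂, Option.none,    Option.some z₄ => (z₄ - z₂) / (z₄ - z₁)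
  | Option.some z₁, Option.some z₂, Option.some z₃, Option.none    => (z₃ - z₁) / (z₃ - z₂)
  | Option.some z₁, Option.some z₂, Option.some z₃, Option.some z₄ =>
      ((z₃ - z₁) * (z₄ - z₂)) / ((z₃ - z₂) * (z₄ - z₁))
  | _, _, _, _ => 0

open MvPolynomial

theorem ncard_setOf_quadratic_eq_zero {K : Type*} [Field K] [IsAlgClosed K] [NeZero (2 : K)]
    {a b c : K} (ha : a ≠ 0) (hd : discrim a b c ≠ 0) :
    {x | a * (x * x) + b * x + c = 0}.ncard = 2 := by
  obtain ⟨s, hs⟩ := IsAlgClosed.exists_eq_mul_self (discrim a b c)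
  have hroots : {x | a * (x * x) + b * x + c = 0} =
      {(-b + s) / (2 * a), (-b - s) / (2 * a)} := by
    ext x
    simp only [Set.mem_ofPred_eq, Set.mem_insert_iff, Set.mem_singleton_iff,
      quadratic_eq_zero_iff ha hs]
  rw [hroots]
  refine Set.ncard_pair fun h => hd ?_
  rw [div_left_inj' (mul_ne_zero two_ne_zero ha)] at h
  have h2s : 2 * s = 0 := by linear_combination h
  simp [hs, (mul_eq_zero.1 h2s).resolve_left two_ne_zero]

def quadResultant {R : Type*} [CommRing R] (a b c a' b' c' : R) : R :=
  (a * c' - c * a') ^ 2 - (a * b' - b * a') * (b * c' - c * b')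

theorem ne_of_quadResultant_ne_zero {R : Type*} [CommRing R] {a b c a' b' c' r s : R}
    (h : quadResultant a b c a' b' c' ≠ 0) (hr : a * (r * r) + b * r + c = 0)
    (hs : a' * (s * s) + b' * s + c' = 0) : r ≠ s := by
  rintro rfl
  apply h
  rw [quadResultant]
  linear_combination (((a*b' - b*a')*r - (a*c' - c*a'))*a' + (a*b' - b*a')*b') * hr +
    (((a*c' - c*a') - (a*b' - b*a')*r)*a - (a*b' - b*a')*b) * hs

theorem quadratic_eq_zero_mul {R : Type*} [CommRing R] {a b c r : R} (l : R)
    (hr : a * (r * r) + b * r + c = 0) :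
    a * (l * r * (l * r)) + l * b * (l * r) + l ^ 2 * c = 0 := by
  linear_combination l ^ 2 * hr

theorem CR_infty_zero (x y : ℂ) : CR ∞ (0 : ℂ) x y = y / x := by
  simp only [CR, sub_zero]

theorem CR_coe (z₁ z₂ z₃ z₄ : ℂ) :
    CR z₁ z₂ z₃ z₄ = ((z₃ - z₁) * (z₄ - z₂)) / ((z₃ - z₂) * (z₄ - z₁)) := rfl

def fiberQuad {K : Type*} [Field K] (A B D x : K) : K :=
  B * (1 - D) * (x * x) + (D + A * B * D - A - B) * x + A * (1 - D)

theorem CR_one_eq_iff_fiberQuad {A B D x : ℂ} (hxA : x ≠ A) (hBx : B * x ≠ 1) :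
    CR (1 : ℂ) A x (B * x : ℂ) = D ↔ fiberQuad A B D x = 0 := by
  rw [CR_coe, div_eq_iff (mul_ne_zero (sub_ne_zero.2 hxA) (sub_ne_zero.2 hBx)), fiberQuad]
  constructor <;> intro h <;> linear_combination h

theorem ne_of_fiberQuad_eq_zero {K : Type*} [Field K] {A B D x : K} (hA : A ≠ 0 ∧ A ≠ 1)
    (hB : B ≠ 0 ∧ B ≠ 1) (hD : D ≠ 0 ∧ D ≠ 1) (hx : fiberQuad A B D x = 0) :
    x ≠ 0 ∧ x ≠ 1 ∧ x ≠ A ∧ B * x ≠ 1 ∧ B * x ≠ A ∧ B * x ≠ x := by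
  obtain ⟨hA0, hA1⟩ := hA
  obtain ⟨hB0, hB1⟩ := hB
  obtain ⟨hD0, hD1⟩ := hD
  have hA1' : 1 - A ≠ 0 := sub_ne_zero.2 hA1.symm
  have hB1' : 1 - B ≠ 0 := sub_ne_zero.2 hB1.symm
  have hD1' : 1 - D ≠ 0 := sub_ne_zero.2 hD1.symm
  rw [fiberQuad] at hx
  have hx0 : x ≠ 0 := by
    rintro rfl
    exact mul_ne_zero hA0 hD1' (by linear_combination hx)
  refine ⟨hx0, ?_, ?_, ?_, ?_, ?_⟩
  · rintro rfl
    exact mul_ne_zero hD0 (mul_ne_zero hA1' hB1') (by linear_combination hx)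
  · intro h
    exact mul_ne_zero hA0 (mul_ne_zero hA1' hB1') (by rw [h] at hx; linear_combination hx)
  · intro h
    exact mul_ne_zero hB0 (mul_ne_zero hA1' hB1')
      (by linear_combination B ^ 2 * hx -
        (B * (1 - D) * (B * x + 1) + (D + A * B * D - A - B) * B) * h)
  · intro h
    exact mul_ne_zero hA0 (mul_ne_zero hB0 (mul_ne_zero hD0 (mul_ne_zero hA1' hB1')))
      (by linear_combination B ^ 2 * hx -
        (B * (1 - D) * (B * x + A) + (D + A * B * D - A - B) * B) * h)
  · intro h
    exact mul_ne_zero hB1' hx0 (by linear_combination -h)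

def fiberConfig (A B C : ℂ) (x : ℂ × ℂ) : Fin 8 → OnePoint ℂ :=
  ![∞, (0 : ℂ), (1 : ℂ), A, x.1, (B * x.1 : ℂ), x.2, (C * x.2 : ℂ)]

theorem fiberConfig_injective (A B C : ℂ) : Function.Injective (fiberConfig A B C) := by
  intro x y h
  have h4 : (x.1 : OnePoint ℂ) = y.1 := congrFun h 4
  have h6 : (x.2 : OnePoint ℂ) = y.2 := congrFun h 6
  exact Prod.ext (coe_injective h4) (coe_injective h6)

theorem fiberConfig_apply_injective {A B C x y : ℂ} (hA : A ≠ 0 ∧ A ≠ 1) (hB : B ≠ 0)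
    (hC : C ≠ 0)
    (hx : x ≠ 0 ∧ x ≠ 1 ∧ x ≠ A ∧ B * x ≠ 1 ∧ B * x ≠ A ∧ B * x ≠ x)
    (hy : y ≠ 0 ∧ y ≠ 1 ∧ y ≠ A ∧ C * y ≠ 1 ∧ C * y ≠ A ∧ C * y ≠ y)
    (hxy : x ≠ y ∧ x ≠ C * y ∧ B * x ≠ y ∧ B * x ≠ C * y) :
    Function.Injective (fiberConfig A B C (x, y)) := by
  simp only [fiberConfig, Matrix.vecCons, Fin.cons_injective_iff]
  simp [Matrix.vecEmpty, Function.injective_of_subsingleton]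
  grind -ring

section Degeneracy

variable {R : Type*} [CommRing R]

def degeneracy (A B C D E : R) : R :=
  let a := B * (1 - D); let b := D + A * B * D - A - B; let c := A * (1 - D)
  let a' := C * (1 - E); let b' := E + A * C * E - A - C; let c' := A * (1 - E)
  discrim a b c * discrim a' b' c' *
    quadResultant a b c a' b' c' * quadResultant a b c a' (C * b') (C ^ 2 * c') *
    quadResultant a (B * b) (B ^ 2 * c) a' b' c' *
    quadResultant a (B * b) (B ^ 2 * c) a' (C * b') (C ^ 2 * c')

theorem map_degeneracy {S : Type*} [CommRing S] (f : R →+* S) (A B C D E : R) :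
    f (degeneracy A B C D E) = degeneracy (f A) (f B) (f C) (f D) (f E) := by
  simp [degeneracy, quadResultant, discrim, map_ofNat]

theorem degeneracy_X_ne_zero :
    (degeneracy (X 0) (X 1) (X 2) (X 3) (X 4) : MvPolynomial (Fin 5) ℂ) ≠ 0 := by
  have h : degeneracy (2 : ℂ) 3 5 7 11 ≠ 0 := by norm_num [degeneracy, quadResultant, discrim]
  contrapose! h
  simpa [map_degeneracy] using congrArg (eval ![2, 3, 5, 7, 11]) h

theorem roots_ne_of_degeneracy_ne_zero {K : Type*} [Field K] {A B C D E x y : K}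
    (h : degeneracy A B C D E ≠ 0) (hx : fiberQuad A B D x = 0) (hy : fiberQuad A C E y = 0) :
    x ≠ y ∧ x ≠ C * y ∧ B * x ≠ y ∧ B * x ≠ C * y := by
  simp only [degeneracy, mul_ne_zero_iff] at h
  obtain ⟨⟨⟨⟨⟨-, -⟩, h₁₁⟩, h₁C⟩, hB₁⟩, hBC⟩ := h
  have hBx := quadratic_eq_zero_mul B hx
  have hCy := quadratic_eq_zero_mul C hy
  exact ⟨ne_of_quadResultant_ne_zero h₁₁ hx hy, ne_of_quadResultant_ne_zero h₁C hx hCy,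
    ne_of_quadResultant_ne_zero hB₁ hBx hy, ne_of_quadResultant_ne_zero hBC hBx hCy⟩

end Degeneracy

def crossRatioFiber (a : Fin 5 → ℂ) : Set (Fin 8 → OnePoint ℂ) :=
  {p | Function.Injective p ∧ p 0 = ∞ ∧ p 1 = ((0 : ℂ) : OnePoint ℂ) ∧
    p 2 = ((1 : ℂ) : OnePoint ℂ) ∧
    CR (p 0) (p 1) (p 2) (p 3) = a 0 ∧
    CR (p 0) (p 1) (p 4) (p 5) = a 1 ∧
    CR (p 0) (p 1) (p 6) (p 7) = a 2 ∧
    CR (p 2) (p 3) (p 4) (p 5) = a 3 ∧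
    CR (p 2) (p 3) (p 6) (p 7) = a 4}

theorem fiberConfig_mem_crossRatioFiber_iff {a : Fin 5 → ℂ} {x : ℂ × ℂ} :
    fiberConfig (a 0) (a 1) (a 2) x ∈ crossRatioFiber a ↔
      Function.Injective (fiberConfig (a 0) (a 1) (a 2) x) ∧
        fiberQuad (a 0) (a 1) (a 3) x.1 = 0 ∧ fiberQuad (a 0) (a 2) (a 4) x.2 = 0 := by
  obtain ⟨v, y⟩ := x
  refine and_congr_right fun hinj => ?_
  have hne (i j : Fin 8) (hij : i ≠ j := by decide) := hinj.ne hij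
  have hv0 : v ≠ 0 := by simpa [fiberConfig] using hne 4 1
  have hy0 : y ≠ 0 := by simpa [fiberConfig] using hne 6 1
  have hvA : v ≠ a 0 := by simpa [fiberConfig] using hne 4 3
  have hyA : y ≠ a 0 := by simpa [fiberConfig] using hne 6 3
  have hBv : a 1 * v ≠ 1 := by simpa [fiberConfig] using hne 5 2
  have hCy : a 2 * y ≠ 1 := by simpa [fiberConfig] using hne 7 2
  simp [fiberConfig, CR_infty_zero, hv0, hy0, CR_one_eq_iff_fiberQuad hvA hBv,
    CR_one_eq_iff_fiberQuad hyA hCy]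

theorem exists_eq_fiberConfig_of_mem_crossRatioFiber {a : Fin 5 → ℂ}
    {p : Fin 8 → OnePoint ℂ} (hp : p ∈ crossRatioFiber a) :
    ∃ x, p = fiberConfig (a 0) (a 1) (a 2) x := by
  obtain ⟨hinj, h0, h1, h2, e1, e2, e3, -, -⟩ := hp
  have hfin : ∀ i ≠ 0, ∃ z : ℂ, p i = z := fun i hi =>
    (ne_infty_iff_exists.1 (h0 ▸ hinj.ne hi)).imp fun _ => Eq.symm
  obtain ⟨u, hu⟩ := hfin 3 (by decide)
  obtain ⟨v, hv⟩ := hfin 4 (by decide)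
  obtain ⟨w, hw⟩ := hfin 5 (by decide)
  obtain ⟨y, hy⟩ := hfin 6 (by decide)
  obtain ⟨z, hz⟩ := hfin 7 (by decide)
  have hv0 : v ≠ 0 := by
    rintro rfl
    exact absurd (hinj (hv.trans h1.symm)) (by decide)
  have hy0 : y ≠ 0 := by
    rintro rfl
    exact absurd (hinj (hy.trans h1.symm)) (by decide)
  rw [h0, h1, h2, hu, CR_infty_zero, div_one] at e1
  rw [h0, h1, hv, hw, CR_infty_zero, div_eq_iff hv0] at e2
  rw [h0, h1, hy, hz, CR_infty_zero, div_eq_iff hy0] at e3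
  refine ⟨(v, y), funext fun i => ?_⟩
  fin_cases i <;> simp [fiberConfig, *]

theorem ncard_setOf_fiberQuad_eq_zero {K : Type*} [Field K] [IsAlgClosed K] [NeZero (2 : K)]
    {A B D : K} (hB : B ≠ 0) (hD : D ≠ 1)
    (hd : discrim (B * (1 - D)) (D + A * B * D - A - B) (A * (1 - D)) ≠ 0) :
    {x | fiberQuad A B D x = 0}.ncard = 2 :=
  ncard_setOf_quadratic_eq_zero (mul_ne_zero hB (sub_ne_zero.2 hD.symm)) hd

theorem crossRatioFiber_eq_image {a : Fin 5 → ℂ} (ha : ∀ i, a i ≠ 0 ∧ a i ≠ 1)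
    (hq : degeneracy (a 0) (a 1) (a 2) (a 3) (a 4) ≠ 0) :
    crossRatioFiber a = fiberConfig (a 0) (a 1) (a 2) ''
      ({x | fiberQuad (a 0) (a 1) (a 3) x = 0} ×ˢ {y | fiberQuad (a 0) (a 2) (a 4) y = 0}) := by
  ext p
  constructor
  · intro hp
    obtain ⟨x, rfl⟩ := exists_eq_fiberConfig_of_mem_crossRatioFiber hp
    exact ⟨x, (fiberConfig_mem_crossRatioFiber_iff.1 hp).2, rfl⟩
  · rintro ⟨⟨x, y⟩, ⟨hx, hy⟩, rfl⟩
    have hinj := fiberConfig_apply_injective (ha 0) (ha 1).1 (ha 2).1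
      (ne_of_fiberQuad_eq_zero (ha 0) (ha 1) (ha 3) hx)
      (ne_of_fiberQuad_eq_zero (ha 0) (ha 2) (ha 4) hy) (roots_ne_of_degeneracy_ne_zero hq hx hy)
    exact fiberConfig_mem_crossRatioFiber_iff.2 ⟨hinj, hx, hy⟩

theorem ncard_crossRatioFiber {a : Fin 5 → ℂ} (ha : ∀ i, a i ≠ 0 ∧ a i ≠ 1)
    (hq : degeneracy (a 0) (a 1) (a 2) (a 3) (a 4) ≠ 0) :
    (crossRatioFiber a).ncard = 4 := by
  have hd := hq
  simp only [degeneracy, mul_ne_zero_iff] at hd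
  obtain ⟨⟨⟨⟨⟨hd₁, hd₂⟩, -⟩, -⟩, -⟩, -⟩ := hd
  rw [crossRatioFiber_eq_image ha hq, Set.ncard_image_of_injective _ (fiberConfig_injective ..),
    Set.ncard_prod, ncard_setOf_fiberQuad_eq_zero (ha 1).1 (ha 3).2 hd₁,
    ncard_setOf_fiberQuad_eq_zero (ha 2).1 (ha 4).2 hd₂]

theorem crossRatioDegree_eq_four_T3 :
    ∃ q : MvPolynomial (Fin 5) ℂ, q ≠ 0 ∧
      ∀ a : Fin 5 → ℂ, (∀ i, a i ≠ 0 ∧ a i ≠ 1) → MvPolynomial.eval a q ≠ 0 →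
        let S : Set (Fin 8 → OnePoint ℂ) :=
          {p | Function.Injective p ∧ p 0 = ∞ ∧ p 1 = ((0 : ℂ) : OnePoint ℂ) ∧
            p 2 = ((1 : ℂ) : OnePoint ℂ) ∧
            CR (p 0) (p 1) (p 2) (p 3) = a 0 ∧
            CR (p 0) (p 1) (p 4) (p 5) = a 1 ∧
            CR (p 0) (p 1) (p 6) (p 7) = a 2 ∧
            CR (p 2) (p 3) (p 4) (p 5) = a 3 ∧
            CR (p 2) (p 3) (p 6) (p 7) = a 4}
        S.Finite ∧ S.ncard = 4 := by
  refine ⟨degeneracy (X 0) (X 1) (X 2) (X 3) (X 4), degeneracy_X_ne_zero, fun a ha hq => ?_⟩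
  simp only [map_degeneracy, eval_X] at hq
  have hcard := ncard_crossRatioFiber ha hq
  show (crossRatioFiber a).Finite ∧ (crossRatioFiber a).ncard = 4
  exact ⟨Set.finite_of_ncard_ne_zero (by rw [hcard]; norm_num), hcard⟩
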